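/- Transfer theorem for connected sums, second equality (Theorem 3): let 0 < q < 1, |x| < 1, let r > 0 and s ≥ 0 be integers and k_1, ..., k_r, l_1, ..., l_s positive integers. Then the connected sums (as values in [0, +∞]) satisfy Z_q(k_1, ..., k_{r-1}, k_r + 1; l_1, ..., l_s; x) = Z_q(k_1, ..., k_r; l_1, ..., l_s, 1; x). -/

import Mathlib

open scoped ENNReal

noncomputable section

/-- Strictly increasing `r`-tuples of positive integers
`0 = m₀ < m₁ < ⋯ < m_r`. -/
def StrictTup (r : ℕ) : Type := {m : Fin r → ℕ // StrictMono m ∧ ∀ i, 0 < m i}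

/-- The `q`-integer `[m]_q = (1 - q^m)/(1 - q)`. -/
def qint (q : ℝ) (m : ℕ) : ℝ := (1 - q ^ m) / (1 - q)

/-- `f_q(m; x) = ∏_{h=1}^m ([h]_q - q^h x)` (empty product = 1). -/
def fq (q x : ℝ) (m : ℕ) : ℝ := ∏ h ∈ Finset.Icc 1 m, (qint q h - q ^ h * x)

/-- The last entry of a tuple, or `0` for the empty tuple (i.e. `m_r`, with `m_0 = 0`). -/
def lastOr0 {r : ℕ} (m : Fin r → ℕ) : ℕ :=
  if h : 0 < r then m ⟨r - 1, by omega⟩ else 0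

/-- The multiple zeta value `ζ(k) = ∑_{0<m₁<⋯<m_r} ∏ 1/m_i^{k_i}`, as a value in `[0,∞]`. -/
def mzeta (k : List ℕ) : ℝ≥0∞ :=
  ∑' m : StrictTup k.length, ∏ i, 1 / (m.1 i : ℝ≥0∞) ^ k.get i

/-- The `q`-multiple zeta value
`ζ_q(k) = ∑_{0<m₁<⋯<m_r} ∏ q^{(k_i-1)m_i}/[m_i]_q^{k_i}`, as a value in `[0,∞]`. -/
def qmzeta (q : ℝ) (k : List ℕ) : ℝ≥0∞ :=
  ∑' m : StrictTup k.length,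
    ENNReal.ofReal (∏ i, q ^ ((k.get i - 1) * m.1 i) / qint q (m.1 i) ^ k.get i)

/-- The summand `∏_i q^{(k_i-1)m_i} / (([m_i]_q - q^{m_i}x) [m_i]_q^{k_i-1})`. -/
def ZqTerm (q x : ℝ) (k : List ℕ) (m : Fin k.length → ℕ) : ℝ :=
  ∏ i, q ^ ((k.get i - 1) * m i) /
    ((qint q (m i) - q ^ (m i) * x) * qint q (m i) ^ (k.get i - 1))

/-- The connected sum `Z_q(k; l; x)`, as a value in `[0,∞]`. -/
def connSum (q x : ℝ) (k l : List ℕ) : ℝ≥0∞ :=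
  ∑' p : StrictTup k.length × StrictTup l.length,
    ENNReal.ofReal (ZqTerm q x k p.1.1 * ZqTerm q x l p.2.1 *
      (q ^ (lastOr0 p.1.1 * lastOr0 p.2.1) * fq q x (lastOr0 p.1.1) *
        fq q x (lastOr0 p.2.1) / fq q x (lastOr0 p.1.1 + lastOr0 p.2.1)))

/-- The one-variable generating series
`Z_q(k; x) = ∑_{0<m₁<⋯<m_r} ∏ q^{(k_i-1)m_i}/(([m_i]_q - q^{m_i}x)[m_i]_q^{k_i-1})`,
as a value in `[0,∞]`. -/
def Zq1 (q x : ℝ) (k : List ℕ) : ℝ≥0∞ :=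
  ∑' m : StrictTup k.length, ENNReal.ofReal (ZqTerm q x k m.1)

/-- The classical connected sum `Z(k; l)`, as a value in `[0,∞]`. -/
def connSumC (k l : List ℕ) : ℝ≥0∞ :=
  ∑' p : StrictTup k.length × StrictTup l.length,
    (∏ i, 1 / (p.1.1 i : ℝ≥0∞) ^ k.get i) * (∏ j, 1 / (p.2.1 j : ℝ≥0∞) ^ l.get j) *
      ((Nat.factorial (lastOr0 p.1.1) : ℝ≥0∞) * (Nat.factorial (lastOr0 p.2.1)) /
        (Nat.factorial (lastOr0 p.1.1 + lastOr0 p.2.1)))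

/-- The admissible index `({1}^{a₁-1}, b₁+1, …, {1}^{a_s-1}, b_s+1)` built from the
list of pairs `ab = [(a₁,b₁),…,(a_s,b_s)]`. -/
def indexFromAB (ab : List (ℕ × ℕ)) : List ℕ :=
  ab.flatMap fun p => List.replicate (p.1 - 1) 1 ++ [p.2 + 1]

/-- The dual index `({1}^{b_s-1}, a_s+1, …, {1}^{b₁-1}, a₁+1)` built from
`ab = [(a₁,b₁),…,(a_s,b_s)]`. -/
def dualFromAB (ab : List (ℕ × ℕ)) : List ℕ :=
  ab.reverse.flatMap fun p => List.replicate (p.2 - 1) 1 ++ [p.1 + 1]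

def Dd (q x : ℝ) (h : ℕ) : ℝ := qint q h - q ^ h * x
def Cc (q x : ℝ) (m n : ℕ) : ℝ := q ^ (m * n) * fq q x m * fq q x n / fq q x (m + n)

section
variable {q x : ℝ}

lemma qint_ge_one (hq0 : 0 < q) (hq1 : q < 1) {m : ℕ} (hm : 1 ≤ m) : 1 ≤ qint q m := by
  rw [qint, le_div_iff₀ (by linarith)]
  have : q ^ m ≤ q ^ 1 := pow_le_pow_of_le_one hq0.le hq1.le hm
  simp only [pow_one] at this; linarith

lemma qint_pos (hq0 : 0 < q) (hq1 : q < 1) {m : ℕ} (hm : 1 ≤ m) : 0 < qint q m :=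
  lt_of_lt_of_le one_pos (qint_ge_one hq0 hq1 hm)

lemma Dd_ge (hq0 : 0 < q) (hq1 : q < 1) (hx : |x| < 1) {m : ℕ} (hm : 1 ≤ m) :
    1 - q ≤ Dd q x m := by
  have h1 : 1 ≤ qint q m := qint_ge_one hq0 hq1 hm
  have hp : 0 < q ^ m := pow_pos hq0 m
  have h2 : q ^ m * x ≤ q ^ m := by nlinarith [(abs_le.1 hx.le).2]
  have h3 : q ^ m ≤ q := by
    have := pow_le_pow_of_le_one hq0.le hq1.le hm
    simpa using this
  unfold Dd; linarith

lemma Dd_pos (hq0 : 0 < q) (hq1 : q < 1) (hx : |x| < 1) {m : ℕ} (hm : 1 ≤ m) :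
    0 < Dd q x m := lt_of_lt_of_le (by linarith) (Dd_ge hq0 hq1 hx hm)

lemma fq_pos (hq0 : 0 < q) (hq1 : q < 1) (hx : |x| < 1) (m : ℕ) : 0 < fq q x m :=
  Finset.prod_pos fun h hh => Dd_pos hq0 hq1 hx (Finset.mem_Icc.1 hh).1

lemma fq_succ (m : ℕ) : fq q x (m + 1) = fq q x m * Dd q x (m + 1) := by
  rw [fq, Finset.prod_Icc_succ_top (by omega)]; rfl

lemma Cc_pos (hq0 : 0 < q) (hq1 : q < 1) (hx : |x| < 1) (m n : ℕ) : 0 < Cc q x m n :=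
  div_pos (mul_pos (mul_pos (pow_pos hq0 _) (fq_pos hq0 hq1 hx _)) (fq_pos hq0 hq1 hx _))
    (fq_pos hq0 hq1 hx _)

lemma Cc_succ (hq0 : 0 < q) (hq1 : q < 1) (hx : |x| < 1) (M n : ℕ) :
    Cc q x M (n + 1) = Cc q x M n * (q ^ M * Dd q x (n + 1) / Dd q x (M + n + 1)) := by
  have hDMn : Dd q x (M + n + 1) ≠ 0 := (Dd_pos hq0 hq1 hx (by omega)).ne'
  have hfMn : fq q x (M + n) ≠ 0 := (fq_pos hq0 hq1 hx _).ne'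
  rw [Cc, Cc, fq_succ n, show M + (n+1) = (M+n)+1 from by ring, fq_succ (M+n),
    show M * (n+1) = M*n + M from by ring, pow_add]
  field_simp

/-- one-Zstep telescoping identity -/
lemma Zstep (hq0 : 0 < q) (hq1 : q < 1) (hx : |x| < 1) {M : ℕ} (hM : 1 ≤ M) (n : ℕ) :
    q ^ M / qint q M * Cc q x M n - q ^ M / qint q M * Cc q x M (n + 1)
      = Cc q x M (n + 1) / Dd q x (n + 1) := by
  have hq' : (1 : ℝ) - q ≠ 0 := by linarith
  have hDn : Dd q x (n + 1) ≠ 0 := (Dd_pos hq0 hq1 hx (by omega)).ne'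
  have hDMn : Dd q x (M + n + 1) ≠ 0 := (Dd_pos hq0 hq1 hx (by omega)).ne'
  have hqM : qint q M ≠ 0 := (qint_pos hq0 hq1 hM).ne'
  have key : Dd q x (M + n + 1) - q ^ M * Dd q x (n + 1) = qint q M := by
    simp only [Dd, qint, pow_add, pow_one]
    field_simp
    ring
  have hDpos : 0 < Dd q x (n + 1) := Dd_pos hq0 hq1 hx (by omega)
  have hupos : 0 < qint q M := qint_pos hq0 hq1 hM
  have h2 : Dd q x (M + n + 1) = qint q M + q ^ M * Dd q x (n + 1) := by linarith
  have hne : qint q M + q ^ M * Dd q x (n + 1) ≠ 0 := by positivity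
  rw [Cc_succ hq0 hq1 hx M n, h2]
  field_simp
  ring
lemma partialSum (hq0 : 0 < q) (hq1 : q < 1) (hx : |x| < 1) {M : ℕ} (hM : 1 ≤ M) (c : ℕ)
    (J : ℕ) :
    ∑ j ∈ Finset.range J, Cc q x M (c + 1 + j) / Dd q x (c + 1 + j)
      = q ^ M / qint q M * Cc q x M c - q ^ M / qint q M * Cc q x M (c + J) := by
  induction J with
  | zero => simp
  | succ J ih =>
      rw [Finset.sum_range_succ, ih, show c + 1 + J = (c + J) + 1 from by omega]
      have := Zstep hq0 hq1 hx hM (c + J)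
      rw [show c + (J + 1) = (c + J) + 1 from by omega]
      linarith

lemma Cc_le (hq0 : 0 < q) (hq1 : q < 1) (hx : |x| < 1) (M N : ℕ) :
    Cc q x M N ≤ (q ^ M) ^ N * (fq q x M / (1 - q) ^ M) := by
  have hq' : (0:ℝ) < 1 - q := by linarith
  have hfN : 0 < fq q x N := fq_pos hq0 hq1 hx N
  have hsplit : fq q x (M + N) = fq q x N * ∏ h ∈ Finset.Ioc N (N + M), Dd q x h := by
    rw [fq, fq, show (1:ℕ) = 0 + 1 from rfl, Finset.Icc_add_one_left_eq_Ioc, Finset.Icc_add_one_left_eq_Ioc,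
      show N + M = M + N from by omega]
    rw [← Finset.prod_Ioc_consecutive _ (Nat.zero_le N) (by omega : N ≤ M + N)]
    rfl
  have hprod : (1 - q) ^ M ≤ ∏ h ∈ Finset.Ioc N (N + M), Dd q x h := by
    have : (1 - q) ^ M = ∏ _h ∈ Finset.Ioc N (N + M), (1 - q) := by
      rw [Finset.prod_const, Nat.card_Ioc]; congr 1; omega
    rw [this]
    exact Finset.prod_le_prod (fun h _ => hq'.le)
      (fun h hh => Dd_ge hq0 hq1 hx (by have := (Finset.mem_Ioc.1 hh).1; omega))
  have hge : fq q x N * (1 - q) ^ M ≤ fq q x (M + N) := by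
    rw [hsplit]; exact mul_le_mul_of_nonneg_left hprod hfN.le
  have hpos : 0 < fq q x N * (1 - q) ^ M := by positivity
  calc Cc q x M N ≤ q ^ (M * N) * fq q x M * fq q x N / (fq q x N * (1 - q) ^ M) := by
        unfold Cc
        gcongr
        exact mul_nonneg (mul_nonneg (by positivity) (fq_pos hq0 hq1 hx M).le) hfN.le
    _ = (q ^ M) ^ N * (fq q x M / (1 - q) ^ M) := by
        rw [← pow_mul]
        field_simp

lemma Cc_tendsto (hq0 : 0 < q) (hq1 : q < 1) (hx : |x| < 1) {M : ℕ} (hM : 1 ≤ M) (c : ℕ) :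
    Filter.Tendsto (fun J => Cc q x M (c + J)) Filter.atTop (nhds 0) := by
  have hqM0 : (0:ℝ) ≤ q ^ M := (pow_pos hq0 M).le
  have hqM1 : q ^ M < 1 := pow_lt_one₀ hq0.le hq1 (by omega)
  have hb : Filter.Tendsto (fun J : ℕ => (q ^ M) ^ (c + J) * (fq q x M / (1 - q) ^ M))
      Filter.atTop (nhds 0) := by
    have h1 : Filter.Tendsto (fun J : ℕ => (q ^ M) ^ (c + J)) Filter.atTop (nhds 0) := by
      have := (tendsto_pow_atTop_nhds_zero_of_lt_one hqM0 hqM1).comp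
        (Filter.tendsto_add_atTop_nat c |>.comp Filter.tendsto_id)
      simpa [Function.comp_def, Nat.add_comm] using
        (tendsto_pow_atTop_nhds_zero_of_lt_one hqM0 hqM1).comp (Filter.tendsto_add_atTop_nat c)
    simpa using h1.mul_const (fq q x M / (1 - q) ^ M)
  refine squeeze_zero (fun J => (Cc_pos hq0 hq1 hx M (c + J)).le)
    (fun J => Cc_le hq0 hq1 hx M (c + J)) hb

lemma hasSum_key (hq0 : 0 < q) (hq1 : q < 1) (hx : |x| < 1) {M : ℕ} (hM : 1 ≤ M) (c : ℕ) :
    HasSum (fun j : ℕ => Cc q x M (c + 1 + j) / Dd q x (c + 1 + j))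
      (q ^ M / qint q M * Cc q x M c) := by
  have hnn : ∀ j : ℕ, 0 ≤ Cc q x M (c + 1 + j) / Dd q x (c + 1 + j) := fun j =>
    (div_pos (Cc_pos hq0 hq1 hx _ _) (Dd_pos hq0 hq1 hx (by omega))).le
  rw [hasSum_iff_tendsto_nat_of_nonneg hnn]
  have h0 : Filter.Tendsto (fun J => q ^ M / qint q M * Cc q x M (c + J)) Filter.atTop
      (nhds 0) := by
    simpa using (Cc_tendsto hq0 hq1 hx hM c).const_mul (q ^ M / qint q M)
  have := (tendsto_const_nhds (x := q ^ M / qint q M * Cc q x M c)).sub h0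
  simp only [sub_zero] at this
  convert this using 2 with J
  exact partialSum hq0 hq1 hx hM c J

def aboveEquiv (c : ℕ) : ℕ ≃ {t : ℕ // c < t} where
  toFun j := ⟨c + 1 + j, by omega⟩
  invFun t := t.1 - (c + 1)
  left_inv j := by simp
  right_inv t := by ext; have := t.2; simp; omega

lemma key_tsum (hq0 : 0 < q) (hq1 : q < 1) (hx : |x| < 1) {M : ℕ} (hM : 1 ≤ M) (c : ℕ) :
    ∑' t : {t : ℕ // c < t}, ENNReal.ofReal (Cc q x M t.1 / Dd q x t.1)
      = ENNReal.ofReal (q ^ M / qint q M * Cc q x M c) := by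
  rw [← Equiv.tsum_eq (aboveEquiv c)
    (fun t : {t : ℕ // c < t} => ENNReal.ofReal (Cc q x M t.1 / Dd q x t.1))]
  have hnn : ∀ j : ℕ, 0 ≤ Cc q x M (c + 1 + j) / Dd q x (c + 1 + j) := fun j =>
    (div_pos (Cc_pos hq0 hq1 hx _ _) (Dd_pos hq0 hq1 hx (by omega))).le
  have hs := hasSum_key hq0 hq1 hx hM c
  rw [show (fun j : ℕ => ENNReal.ofReal (Cc q x M ((aboveEquiv c j) : ℕ) / Dd q x ((aboveEquiv c j) : ℕ)))
      = fun j : ℕ => ENNReal.ofReal (Cc q x M (c + 1 + j) / Dd q x (c + 1 + j)) from rfl]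
  rw [← ENNReal.ofReal_tsum_of_nonneg hnn hs.summable, hs.tsum_eq]
end

/-- general term with explicit exponent tuple -/
def ZTerm (q x : ℝ) {r : ℕ} (e : Fin r → ℕ) (m : Fin r → ℕ) : ℝ :=
  ∏ i, q ^ ((e i - 1) * m i) / ((qint q (m i) - q ^ (m i) * x) * qint q (m i) ^ (e i - 1))

example (q x : ℝ) (k : List ℕ) (m : Fin k.length → ℕ) : ZqTerm q x k m = ZTerm q x k.get m := rfl

def connSum' (q x : ℝ) {r s : ℕ} (e : Fin r → ℕ) (f : Fin s → ℕ) : ℝ≥0∞ :=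
  ∑' p : StrictTup r × StrictTup s,
    ENNReal.ofReal (ZTerm q x e p.1.1 * ZTerm q x f p.2.1 *
      Cc q x (lastOr0 p.1.1) (lastOr0 p.2.1))

example (q x : ℝ) (k l : List ℕ) : connSum q x k l = connSum' q x k.get l.get := rfl

def stCast {a b : ℕ} (h : a = b) : StrictTup a ≃ StrictTup b := by subst h; rfl

lemma connSum'_cast (q x : ℝ) {r r' s : ℕ} (h : r = r') (e : Fin r → ℕ) (e' : Fin r' → ℕ)
    (he : ∀ i : Fin r', e' i = e (Fin.cast h.symm i)) (f : Fin s → ℕ) :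
    connSum' q x e f = connSum' q x e' f := by
  subst h
  have : e' = e := by funext i; simpa using he i
  rw [this]

lemma connSum'_cast₂ (q x : ℝ) {r s s' : ℕ} (h : s = s') (e : Fin r → ℕ) (f : Fin s → ℕ)
    (f' : Fin s' → ℕ) (hf : ∀ j : Fin s', f' j = f (Fin.cast h.symm j)) :
    connSum' q x e f = connSum' q x e f' := by
  subst h
  have : f' = f := by funext j; simpa using hf j
  rw [this]

lemma append_get {k : List ℕ} {c : ℕ} (i : Fin (k.length + 1)) :
    (k ++ [c]).get (Fin.cast (by simp) i) = Fin.snoc (α := fun _ => ℕ) k.get c i := by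
  rcases i with ⟨iv, hi⟩
  rcases Nat.lt_or_ge iv k.length with h | h
  · have : (⟨iv, hi⟩ : Fin (k.length + 1)) = Fin.castSucc ⟨iv, h⟩ := rfl
    rw [this, Fin.snoc_castSucc]
    simp [List.get_eq_getElem, List.getElem_append_left h]
  · have hv : iv = k.length := by omega
    subst hv
    have : (⟨k.length, hi⟩ : Fin (k.length + 1)) = Fin.last _ := rfl
    rw [this, Fin.snoc_last]
    simp [List.get_eq_getElem]

lemma connSum_append (q x : ℝ) (k : List ℕ) (c : ℕ) (l : List ℕ) :
    connSum q x (k ++ [c]) l = connSum' q x (Fin.snoc k.get c) l.get := by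
  show connSum' q x (k ++ [c]).get l.get = _
  exact connSum'_cast q x (by simp) _ _ (fun i => (append_get i).symm) _

lemma connSum_append₂ (q x : ℝ) (k l : List ℕ) (c : ℕ) :
    connSum q x k (l ++ [c]) = connSum' q x k.get (Fin.snoc l.get c) := by
  show connSum' q x k.get (l ++ [c]).get = _
  exact connSum'_cast₂ q x (by simp) _ _ _ (fun i => (append_get i).symm)

lemma lastOr0_succ {r : ℕ} (m : Fin (r + 1) → ℕ) : lastOr0 m = m (Fin.last r) := by
  rw [lastOr0, dif_pos (Nat.succ_pos r)]; rfl

lemma lastOr0_snoc {s : ℕ} (a : Fin s → ℕ) (t : ℕ) :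
    lastOr0 (Fin.snoc a t) = t := by
  rw [lastOr0_succ, Fin.snoc_last]

lemma strictMono_init {s : ℕ} {u : Fin (s + 1) → ℕ} (hu : StrictMono u) :
    StrictMono (Fin.init u) :=
  fun i j h => hu (by simpa [Fin.castSucc_lt_castSucc_iff] using h)

lemma lastOr0_lt_last {s : ℕ} (m : StrictTup (s + 1)) :
    lastOr0 (Fin.init m.1) < m.1 (Fin.last s) := by
  rcases Nat.eq_zero_or_pos s with hs | hs
  · subst hs
    rw [lastOr0, dif_neg (by omega)]
    exact m.2.2 _
  · rw [lastOr0, dif_pos hs]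
    exact m.2.1 (show Fin.castSucc ⟨s - 1, by omega⟩ < Fin.last s by
      simp [Fin.lt_def]; omega)

lemma strictMono_snoc {s : ℕ} (a : StrictTup s) (t : ℕ) (ht : lastOr0 a.1 < t) :
    StrictMono (Fin.snoc (α := fun _ => ℕ) a.1 t) := by
  rw [Fin.strictMono_iff_lt_succ]
  intro i
  rcases Nat.lt_or_ge (i.1 + 1) s with h | h
  · have h1 : i.succ = Fin.castSucc ⟨i.1 + 1, h⟩ := rfl
    rw [h1, Fin.snoc_castSucc, Fin.snoc_castSucc]
    exact a.2.1 (show (i : Fin s) < ⟨i.1+1, h⟩ by simp [Fin.lt_def])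
  · have h2 : i.1 + 1 = s := by omega
    have h1 : i.succ = Fin.last s := by ext; simpa using h2
    rw [h1, Fin.snoc_last, Fin.snoc_castSucc]
    refine lt_of_le_of_lt ?_ ht
    rw [lastOr0, dif_pos (by omega)]
    have : i = (⟨s - 1, by omega⟩ : Fin s) := by ext; simp; omega
    exact le_of_eq (congrArg a.1 this)

lemma pos_snoc {s : ℕ} (a : StrictTup s) (t : ℕ) (ht : lastOr0 a.1 < t) :
    ∀ i, 0 < Fin.snoc (α := fun _ => ℕ) a.1 t i := by
  intro i
  refine Fin.lastCases ?_ ?_ i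
  · rw [Fin.snoc_last]; omega
  · intro j; rw [Fin.snoc_castSucc]; exact a.2.2 j

/-- decompose a strict tuple of length `s+1` as (initial part, last entry) -/
def snocEquiv (s : ℕ) : (Σ a : StrictTup s, {t : ℕ // lastOr0 a.1 < t}) ≃ StrictTup (s + 1) where
  toFun y := ⟨Fin.snoc y.1.1 y.2.1, strictMono_snoc y.1 y.2.1 y.2.2, pos_snoc y.1 y.2.1 y.2.2⟩
  invFun m := ⟨⟨Fin.init m.1, strictMono_init m.2.1, fun i => m.2.2 _⟩,
    ⟨m.1 (Fin.last s), lastOr0_lt_last m⟩⟩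
  left_inv y := by
    rcases y with ⟨a, t⟩
    refine Sigma.ext (Subtype.ext (by simp)) ((Subtype.heq_iff_coe_eq ?_).mpr ?_)
    · intro u
      simp
    · simp
  right_inv m := Subtype.ext (Fin.snoc_init_self m.1)

def Zfac (q x : ℝ) (c M : ℕ) : ℝ :=
  q ^ ((c - 1) * M) / ((qint q M - q ^ M * x) * qint q M ^ (c - 1))

lemma ZTerm_eq_prod_fac (q x : ℝ) {r : ℕ} (e m : Fin r → ℕ) :
    ZTerm q x e m = ∏ i, Zfac q x (e i) (m i) := rfl

section
variable {q x : ℝ}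

lemma qint_ge_one' (hq0 : 0 < q) (hq1 : q < 1) {m : ℕ} (hm : 1 ≤ m) : 1 ≤ qint q m := by
  rw [qint, le_div_iff₀ (by linarith)]
  have : q ^ m ≤ q ^ 1 := pow_le_pow_of_le_one hq0.le hq1.le hm
  simp only [pow_one] at this; linarith

lemma Zfac_pos (hq0 : 0 < q) (hq1 : q < 1) (hx : |x| < 1) {c M : ℕ} (hM : 1 ≤ M) :
    0 < Zfac q x c M := by
  have h1 : 1 ≤ qint q M := qint_ge_one' hq0 hq1 hM
  have h2 : q ^ M * x ≤ q ^ M := by nlinarith [(abs_le.1 hx.le).2, pow_pos hq0 M]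
  have h3 : q ^ M ≤ q := by
    have := pow_le_pow_of_le_one hq0.le hq1.le hM; simpa using this
  have hD : 0 < qint q M - q ^ M * x := by linarith
  have : 0 < qint q M := by linarith
  exact div_pos (pow_pos hq0 _) (mul_pos hD (pow_pos this _))

lemma ZTerm_pos (hq0 : 0 < q) (hq1 : q < 1) (hx : |x| < 1) {r : ℕ} (e : Fin r → ℕ)
    (m : StrictTup r) : 0 < ZTerm q x e m.1 := by
  rw [ZTerm_eq_prod_fac]
  exact Finset.prod_pos fun i _ => Zfac_pos hq0 hq1 hx (m.2.2 i)

lemma Zfac_succ (hq0 : 0 < q) (hq1 : q < 1) (hx : |x| < 1) {kr M : ℕ} (hkr : 1 ≤ kr)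
    (hM : 1 ≤ M) : Zfac q x (kr + 1) M = Zfac q x kr M * (q ^ M / qint q M) := by
  have h1 : 1 ≤ qint q M := qint_ge_one' hq0 hq1 hM
  have h2 : q ^ M * x ≤ q ^ M := by nlinarith [(abs_le.1 hx.le).2, pow_pos hq0 M]
  have h3 : q ^ M ≤ q := by
    have := pow_le_pow_of_le_one hq0.le hq1.le hM; simpa using this
  have hDpos : (0:ℝ) < qint q M - q ^ M * x := by linarith
  have hD : qint q M - q ^ M * x ≠ 0 := hDpos.ne'
  have hq' : qint q M ≠ 0 := by linarith
  obtain ⟨a, rfl⟩ : ∃ a, kr = a + 1 := ⟨kr - 1, by omega⟩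
  have hpw : qint q M ^ a ≠ 0 := pow_ne_zero a hq'
  rw [Zfac, Zfac]
  simp only [Nat.add_sub_cancel]
  rw [show (a + 1) * M = a * M + M from by ring, pow_add, pow_succ]
  field_simp

lemma ZTerm_snoc_exp (hq0 : 0 < q) (hq1 : q < 1) (hx : |x| < 1) {r : ℕ} (e : Fin r → ℕ)
    {kr : ℕ} (hkr : 1 ≤ kr) (m : Fin (r + 1) → ℕ) (hM : 1 ≤ m (Fin.last r)) :
    ZTerm q x (Fin.snoc e (kr + 1)) m
      = ZTerm q x (Fin.snoc e kr) m * (q ^ (m (Fin.last r)) / qint q (m (Fin.last r))) := by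
  rw [ZTerm_eq_prod_fac, ZTerm_eq_prod_fac, Fin.prod_univ_castSucc, Fin.prod_univ_castSucc]
  simp only [Fin.snoc_castSucc, Fin.snoc_last]
  rw [Zfac_succ hq0 hq1 hx hkr hM]
  ring

lemma ZTerm_snoc_one (q x : ℝ) {s : ℕ} (f : Fin s → ℕ) (a : Fin s → ℕ) (t : ℕ) :
    ZTerm q x (Fin.snoc f 1) (Fin.snoc a t) = ZTerm q x f a * (1 / Dd q x t) := by
  rw [ZTerm_eq_prod_fac, ZTerm_eq_prod_fac, Fin.prod_univ_castSucc]
  simp only [Fin.snoc_castSucc, Fin.snoc_last]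
  congr 1
  rw [Zfac]
  simp [Dd]

end

lemma connSum'_snoc {q x : ℝ} (hq0 : 0 < q) (hq1 : q < 1) (hx : |x| < 1) {r s : ℕ}
    (e : Fin r → ℕ) (f : Fin s → ℕ) {kr : ℕ} (hkr : 1 ≤ kr) :
    connSum' q x (Fin.snoc e (kr + 1)) f = connSum' q x (Fin.snoc e kr) (Fin.snoc f 1) := by
  rw [connSum', connSum', ENNReal.tsum_prod', ENNReal.tsum_prod']
  refine tsum_congr fun m => ?_
  rw [← Equiv.tsum_eq (snocEquiv s) (fun n => ENNReal.ofReal (ZTerm q x (Fin.snoc e kr) m.1 *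
    ZTerm q x (Fin.snoc f 1) n.1 * Cc q x (lastOr0 m.1) (lastOr0 n.1)))]
  rw [ENNReal.tsum_sigma']
  refine tsum_congr fun a => ?_
  have hM : 1 ≤ m.1 (Fin.last r) := m.2.2 _
  have hA' : 0 < ZTerm q x (Fin.snoc e kr) m.1 := ZTerm_pos hq0 hq1 hx _ m
  have hB : 0 < ZTerm q x f a.1 := ZTerm_pos hq0 hq1 hx _ a
  calc ENNReal.ofReal (ZTerm q x (Fin.snoc e (kr + 1)) m.1 * ZTerm q x f a.1 *
        Cc q x (lastOr0 m.1) (lastOr0 a.1))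
      = ENNReal.ofReal (ZTerm q x (Fin.snoc e kr) m.1 * ZTerm q x f a.1) *
        ENNReal.ofReal (q ^ (m.1 (Fin.last r)) / qint q (m.1 (Fin.last r)) *
          Cc q x (lastOr0 m.1) (lastOr0 a.1)) := by
        rw [← ENNReal.ofReal_mul (by positivity)]
        congr 1
        rw [ZTerm_snoc_exp hq0 hq1 hx e hkr m.1 hM]
        ring
    _ = ENNReal.ofReal (ZTerm q x (Fin.snoc e kr) m.1 * ZTerm q x f a.1) *
        ∑' t : {t : ℕ // lastOr0 a.1 < t},
          ENNReal.ofReal (Cc q x (lastOr0 m.1) t.1 / Dd q x t.1) := by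
        rw [key_tsum hq0 hq1 hx (by rw [lastOr0_succ]; exact hM) (lastOr0 a.1)]
        rw [lastOr0_succ m.1]
    _ = ∑' t : {t : ℕ // lastOr0 a.1 < t},
          ENNReal.ofReal (ZTerm q x (Fin.snoc e kr) m.1 *
            ZTerm q x (Fin.snoc f 1) (Fin.snoc a.1 t.1) *
            Cc q x (lastOr0 m.1) (lastOr0 (Fin.snoc (α := fun _ => ℕ) a.1 t.1))) := by
        rw [← ENNReal.tsum_mul_left]
        refine tsum_congr fun t => ?_
        rw [← ENNReal.ofReal_mul (by positivity)]
        congr 1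
        rw [ZTerm_snoc_one, lastOr0_snoc]
        ring
    _ = _ := by
        refine tsum_congr fun t => ?_
        rfl

theorem connSum_transfer_second' (q x : ℝ) (hq0 : 0 < q) (hq1 : q < 1) (hx : |x| < 1)
    (k l : List ℕ) (kr : ℕ) (hkr : 0 < kr) :
    connSum q x (k ++ [kr + 1]) l = connSum q x (k ++ [kr]) (l ++ [1]) := by
  rw [connSum_append, connSum_append₂]
  rw [connSum'_cast q x (by simp) ((k ++ [kr]).get) (Fin.snoc k.get kr)
    (fun i => (append_get i).symm)]
  exact connSum'_snoc hq0 hq1 hx k.get l.get hkr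

/-- **Transfer theorem for connected sums, second equality.**
`Z_q(k₁,…,k_{r-1},k_r+1; l₁,…,l_s; x) = Z_q(k₁,…,k_r; l₁,…,l_s,1; x)` for `r > 0`. -/
theorem connSum_transfer_second (q x : ℝ) (hq0 : 0 < q) (hq1 : q < 1) (hx : |x| < 1)
    (k l : List ℕ) (kr : ℕ) (hk : ∀ a ∈ k, 0 < a) (hl : ∀ a ∈ l, 0 < a) (hkr : 0 < kr) :
    connSum q x (k ++ [kr + 1]) l = connSum q x (k ++ [kr]) (l ++ [1]) := by
  exact connSum_transfer_second' q x hq0 hq1 hx k l kr hkr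

end
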